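/- arXiv:1104.4022 — 6 statements merged into one kernel-verified Lean document; each statement's English description precedes it below -/
import Mathlib

section
/- Let G be a finite connected simple graph with vertex set V and a distinguished root r ∈ V, let P : V → Option V and H : V → ℕ satisfy: P(r) = none and H(r) = 0; and for every v ≠ r, P(v) = some u for some neighbor u of v with H(u) = min{H(w) : w a neighbor of v} and H(v) = H(u) + 1. Then H(v) = d(r,v) for every vertex v, following the parent pointers from any vertex v reaches r in exactly d(r,v) steps, and the set of edges {v, u} with P(v) = some u forms a spanning tree of G in which the distance from each vertex to r equals its distance to r in G. -/
/-!
Along parent pointers the height drops by exactly one, so every vertex `v` has a parent walk of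
length `H v` to the root, whence `d(r,v) ≤ H v`; conversely the `min` rule gives
`H v ≤ H w + 1` for every neighbour `w`, so induction along a shortest walk gives
`H v ≤ d(r,v)`. The parent edges form a tree: in a cycle, a vertex of maximal height would have
both of its cycle neighbours below it, hence both equal to its unique parent. The same two bounds
applied inside the tree show that it preserves distances to the root.
-/

section Descent

variable {V : Type*} {r : V} {H : V → ℕ} {f : V → V}

theorem height_iterate_add (hr : H r = 0) (hsucc : ∀ v, v ≠ r → H v = H (f v) + 1) (v : V) :
    ∀ i ≤ H v, H (f^[i] v) + i = H v
  | 0, _ => rfl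
  | i + 1, hi => by
    have hprev := height_iterate_add hr hsucc v i (by omega)
    have hne : f^[i] v ≠ r := fun h => by rw [h, hr] at hprev; omega
    rw [Function.iterate_succ_apply']
    have := hsucc _ hne
    omega

theorem iterate_height_eq (hr : H r = 0) (hsucc : ∀ v, v ≠ r → H v = H (f v) + 1) (v : V) :
    f^[H v] v = r := by
  by_contra hne
  have := height_iterate_add hr hsucc v (H v) le_rfl
  have := hsucc _ hne
  omega

theorem iterate_ne_of_lt_height (hr : H r = 0) (hsucc : ∀ v, v ≠ r → H v = H (f v) + 1)
    {v : V} {i : ℕ} (hi : i < H v) : f^[i] v ≠ r := fun h => by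
  have := height_iterate_add hr hsucc v i hi.le
  rw [h, hr] at this
  omega

theorem parent_eq_some_iff {P : V → Option V} (hroot : P r = none)
    (hsome : ∀ v, v ≠ r → (P v).isSome) (hf : ∀ v u, P v = some u → f v = u) {v u : V} :
    P v = some u ↔ v ≠ r ∧ f v = u := by
  refine ⟨fun h => ⟨by rintro rfl; simp [hroot] at h, hf v u h⟩, ?_⟩
  rintro ⟨hv, rfl⟩
  obtain ⟨u, hu⟩ := Option.isSome_iff_exists.1 (hsome v hv)
  rw [hu, hf v u hu]

namespace SimpleGraph

variable {G : SimpleGraph V}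

theorem exists_walk_length_eq_height (hr : H r = 0) (hadj : ∀ v, v ≠ r → G.Adj v (f v))
    (hsucc : ∀ v, v ≠ r → H v = H (f v) + 1) (v : V) :
    ∃ p : G.Walk v r, p.length = H v := by
  induction hn : H v generalizing v with
  | zero =>
    obtain rfl : v = r := by by_contra hne; have := hsucc v hne; omega
    exact ⟨.nil, rfl⟩
  | succ n ih =>
    have hne : v ≠ r := by rintro rfl; omega
    obtain ⟨p, hp⟩ := ih (f v) (by have := hsucc v hne; omega)
    exact ⟨.cons (hadj v hne) p, by simp [hp]⟩

theorem height_le_length (hr : H r = 0)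
    (hnbr : ∀ v, v ≠ r → ∀ w, G.Adj v w → H v ≤ H w + 1) :
    ∀ {v : V} (p : G.Walk v r), H v ≤ p.length
  | _, .nil => by simp [hr]
  | v, .cons (v := w) h p => by
    have := height_le_length hr hnbr p
    by_cases hv : v = r
    · simp [hv, hr]
    · have := hnbr v hv w h
      simp only [Walk.length_cons]
      omega

theorem height_eq_dist (hG : G.Connected) (hr : H r = 0) (hadj : ∀ v, v ≠ r → G.Adj v (f v))
    (hsucc : ∀ v, v ≠ r → H v = H (f v) + 1)
    (hnbr : ∀ v, v ≠ r → ∀ w, G.Adj v w → H v ≤ H w + 1) (v : V) :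
    H v = G.dist r v := by
  apply le_antisymm
  · obtain ⟨p, hp⟩ := hG.exists_walk_length_eq_dist v r
    rw [dist_comm, ← hp]
    exact height_le_length hr hnbr p
  · obtain ⟨p, hp⟩ := exists_walk_length_eq_height hr hadj hsucc v
    rw [dist_comm, ← hp]
    exact dist_le p

theorem isAcyclic_of_forall_adj_height_le
    (hparent : ∀ a b, G.Adj a b → H b ≤ H a → b = f a) :
    G.IsAcyclic := by
  classical
  intro v c hc
  obtain ⟨m, hm, hmax⟩ := c.support.toFinset.exists_max_image H
    ⟨v, List.mem_toFinset.2 c.start_mem_support⟩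
  rw [List.mem_toFinset] at hm
  let c' := c.rotate m hm
  have hc' : c'.IsCycle := hc.rotate hm
  have hlow : ∀ x ∈ c'.support, G.Adj m x → x = f m := fun x hx hmx =>
    hparent m x hmx (hmax x (List.mem_toFinset.2 ((c.mem_support_rotate_iff m hm).1 hx)))
  have hsnd := hlow _ (c'.getVert_mem_support 1) (c'.adj_snd hc'.not_nil)
  have hpen := hlow _ (c'.getVert_mem_support _) (c'.adj_penultimate hc'.not_nil).symm
  exact hc'.snd_ne_penultimate (hsnd.trans hpen.symm)

end SimpleGraph

end Descent

open SimpleGraph in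
theorem minPlusOne_legitimate_spanning_tree_general
    {V : Type*} (G : SimpleGraph V) (hG : G.Connected) (r : V)
    (P : V → Option V) (H : V → ℕ)
    (hProot : P r = none) (hHroot : H r = 0)
    (hvert : ∀ v : V, v ≠ r → ∃ u : V, P v = some u ∧ G.Adj v u ∧
      H u = sInf (H '' (G.neighborSet v)) ∧ H v = H u + 1)
    (step : V → V)
    (hstep : ∀ v u : V, P v = some u → step v = u)
    (T : SimpleGraph V)
    (hT : ∀ a b : V, T.Adj a b ↔ (P a = some b ∨ P b = some a)) :
    (∀ v : V, H v = G.dist r v) ∧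
    (∀ v : V, step^[G.dist r v] v = r ∧ ∀ i < G.dist r v, step^[i] v ≠ r) ∧
    T.IsTree ∧ T ≤ G ∧ (∀ v : V, T.dist r v = G.dist r v) := by
  have hpar : ∀ v u, P v = some u ↔ v ≠ r ∧ step v = u := fun v u =>
    parent_eq_some_iff hProot (fun v hv => by obtain ⟨u, h, -⟩ := hvert v hv; simp [h]) hstep
  have hspec : ∀ v, v ≠ r → G.Adj v (step v) ∧ H v = H (step v) + 1 ∧
      ∀ w, G.Adj v w → H v ≤ H w + 1 := by
    intro v hv
    obtain ⟨u, hvu, hadj, hmin, hsucc⟩ := hvert v hv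
    obtain rfl := hstep v u hvu
    refine ⟨hadj, hsucc, fun w hw => ?_⟩
    have : H (step v) ≤ H w := hmin ▸ Nat.sInf_le ⟨w, hw, rfl⟩
    omega
  have hsucc : ∀ v, v ≠ r → H v = H (step v) + 1 := fun v hv => (hspec v hv).2.1
  have hTadj : ∀ a b, T.Adj a b ↔ (a ≠ r ∧ step a = b) ∨ (b ≠ r ∧ step b = a) := by
    simp only [hT, hpar, implies_true]
  have hTG : T ≤ G := fun a b hab => by
    rcases (hTadj a b).1 hab with ⟨ha, rfl⟩ | ⟨hb, rfl⟩
    exacts [(hspec a ha).1, (hspec b hb).1.symm]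
  have hTstep : ∀ v, v ≠ r → T.Adj v (step v) := fun v hv => (hTadj _ _).2 (.inl ⟨hv, rfl⟩)
  have hHG := height_eq_dist hG hHroot (fun v hv => (hspec v hv).1) hsucc
    fun v hv => (hspec v hv).2.2
  have hTconn : T.Connected := (connected_iff_exists_forall_reachable _).2 ⟨r, fun v =>
    (exists_walk_length_eq_height hHroot hTstep hsucc v).choose.reverse.reachable⟩
  have hHT := height_eq_dist hTconn hHroot hTstep hsucc fun v hv w hw =>
    (hspec v hv).2.2 w (hTG hw)
  have hTacyc : T.IsAcyclic := isAcyclic_of_forall_adj_height_le (H := H) fun a b hab hle => by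
    rcases (hTadj a b).1 hab with ⟨-, rfl⟩ | ⟨hb, rfl⟩
    · rfl
    · have := hsucc b hb
      omega
  refine ⟨hHG, fun v => ?_, ⟨hTconn, hTacyc⟩, hTG, fun v => (hHT v).symm.trans (hHG v)⟩
  rw [← hHG v]
  exact ⟨iterate_height_eq hHroot hsucc v, fun i hi => iterate_ne_of_lt_height hHroot hsucc hi⟩

/-- In a legitimate configuration of the `min+1` protocol with root `r` (no Byzantine vertex):
heights equal BFS distances to `r`, parent pointers lead from any vertex to `r` in exactly
`d(r,v)` steps, and the parent edges form a spanning tree of `G` preserving distances to `r`. -/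
theorem minPlusOne_legitimate_spanning_tree
    {V : Type*} [Fintype V] (G : SimpleGraph V) (hG : G.Connected) (r : V)
    (P : V → Option V) (H : V → ℕ)
    (hProot : P r = none) (hHroot : H r = 0)
    (hvert : ∀ v : V, v ≠ r → ∃ u : V, P v = some u ∧ G.Adj v u ∧
      H u = sInf (H '' (G.neighborSet v)) ∧ H v = H u + 1)
    (step : V → V)
    (hstep : ∀ v u : V, P v = some u → step v = u)
    (T : SimpleGraph V)
    (hT : ∀ a b : V, T.Adj a b ↔ (P a = some b ∨ P b = some a)) :
    (∀ v : V, H v = G.dist r v) ∧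
    (∀ v : V, step^[G.dist r v] v = r ∧ ∀ i < G.dist r v, step^[i] v ≠ r) ∧
    T.IsTree ∧ T ≤ G ∧ (∀ v : V, T.dist r v = G.dist r v) :=
  minPlusOne_legitimate_spanning_tree_general G hG r P H hProot hHroot hvert step hstep T hT
end

section
/- Let G be a finite connected simple graph with vertex set V, r ∈ V a distinguished root, and B ⊆ V a set of Byzantine vertices with r ∉ B. Then the root r lies outside the containment zone S_B, and the subgraph of G induced on the set V \ S_B = {v ∈ V : ∀ b ∈ B, d(v,b) > d(r,v)} is connected. -/
/-- The root `r` lies outside the containment zone `S_B`, and the subgraph of `G` induced on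
the complement of `S_B`, namely `{v : ∀ b ∈ B, d(v,b) > d(r,v)}`, is connected. -/
theorem complement_SB_connected
    {V : Type*} [Fintype V] (G : SimpleGraph V) (hG : G.Connected) (r : V)
    (B : Set V) (hrB : r ∉ B) :
    (∀ b ∈ B, G.dist r r < G.dist r b) ∧
    (G.induce {v : V | ∀ b ∈ B, G.dist r v < G.dist v b}).Connected := by
  set S : Set V := {v : V | ∀ b ∈ B, G.dist r v < G.dist v b} with hS
  have hrS : r ∈ S := by
    intro b hb
    rw [SimpleGraph.dist_self]
    exact hG.pos_dist_of_ne (fun h => hrB (h ▸ hb))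
  refine ⟨fun b hb => by rw [SimpleGraph.dist_self]; exact hG.pos_dist_of_ne (fun h => hrB (h ▸ hb)), ?_⟩
  have key : ∀ n : ℕ, ∀ v, ∀ hv : v ∈ S, G.dist r v = n →
      (G.induce S).Reachable ⟨v, hv⟩ ⟨r, hrS⟩ := by
    intro n
    induction n using Nat.strong_induction_on with
    | _ n ih =>
      intro v hv hdist
      by_cases hvr : v = r
      · subst hvr; rfl
      · obtain ⟨p, hp⟩ := (hG.preconnected r v).exists_walk_length_eq_dist
        have hq : p.reverse.length = G.dist r v := by
          rw [SimpleGraph.Walk.length_reverse]; exact hp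
        cases hq' : p.reverse with
        | nil => exact absurd rfl hvr
        | @cons _ u _ h q' =>
          have hlen : q'.length + 1 = G.dist r v := by
            rw [← hq, hq']; simp
          have hru : G.dist r u + 1 ≤ G.dist r v := by
            have : G.dist r u ≤ q'.length := by
              rw [SimpleGraph.dist_comm]; exact SimpleGraph.dist_le q'
            omega
          have hu : u ∈ S := by
            intro b hb
            have h1 : G.dist v b ≤ G.dist v u + G.dist u b := hG.dist_triangle
            have h2 : G.dist v u ≤ 1 := by
              simpa using SimpleGraph.dist_le (SimpleGraph.Walk.cons h SimpleGraph.Walk.nil)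
            have h3 : G.dist r v < G.dist v b := hv b hb
            omega
          have hult : G.dist r u < n := by omega
          have hreach := ih (G.dist r u) hult u hu rfl
          have hadj : (G.induce S).Adj ⟨v, hv⟩ ⟨u, hu⟩ := h
          exact hadj.reachable.trans hreach
  have : Nonempty S := ⟨⟨r, hrS⟩⟩
  constructor
  intro x y
  exact (key _ x.1 x.2 rfl).trans (key _ y.1 y.2 rfl).symm
end

section
/- Let G be a finite connected simple graph with vertex set V, r ∈ V a distinguished root, and B ⊆ V a set of Byzantine vertices with r ∉ B. Then the root r lies outside the containment zone S_B*, and the subgraph of G induced on the set V \ S_B* = {v ∈ V : ∀ b ∈ B, d(v,b) ≥ d(r,v)} is connected. -/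
/-- The root `r` lies outside the containment zone `S_B*`, and the subgraph of `G` induced on
the complement of `S_B*`, namely `{v : ∀ b ∈ B, d(v,b) ≥ d(r,v)}`, is connected. -/
theorem complement_SBstar_connected
    {V : Type*} [Fintype V] (G : SimpleGraph V) (hG : G.Connected) (r : V)
    (B : Set V) (hrB : r ∉ B) :
    (∀ b ∈ B, G.dist r r ≤ G.dist r b) ∧
    (G.induce {v : V | ∀ b ∈ B, G.dist r v ≤ G.dist v b}).Connected := by
  set S : Set V := {v : V | ∀ b ∈ B, G.dist r v ≤ G.dist v b} with hS
  have hrS : r ∈ S := by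
    intro b hb
    simp [SimpleGraph.dist_self]
  refine ⟨fun b hb => by simp [SimpleGraph.dist_self], ?_⟩
  rw [SimpleGraph.connected_iff]
  refine ⟨?_, ⟨⟨r, hrS⟩⟩⟩
  -- key: every v ∈ S is reachable from r in the induced graph
  have key : ∀ n : ℕ, ∀ v : V, (hvS : v ∈ S) → G.dist r v = n →
      (G.induce S).Reachable ⟨r, hrS⟩ ⟨v, hvS⟩ := by
    intro n
    induction n with
    | zero =>
      intro v hv hd
      have : r = v := (hG.dist_eq_zero_iff.mp hd)
      subst this
      exact SimpleGraph.Reachable.refl _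
    | succ n ih =>
      intro v hv hd
      obtain ⟨p, hp⟩ := hG.exists_walk_length_eq_dist r v
      rw [hd] at hp
      -- look at the reversed walk: v to r
      cases hrev : p.reverse with
      | nil =>
        exfalso
        have := congrArg SimpleGraph.Walk.length hrev
        rw [SimpleGraph.Walk.length_reverse, hp] at this
        simp at this
      | cons hadj q =>
        -- hadj : G.Adj v u, q : Walk u r
        rename_i u
        have hlen : q.length = n := by
          have := congrArg SimpleGraph.Walk.length hrev
          rw [SimpleGraph.Walk.length_reverse, hp] at this
          simpa using this.symm
        have hdru : G.dist r u ≤ n := by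
          calc G.dist r u = G.dist u r := SimpleGraph.dist_comm ..
            _ ≤ q.length := SimpleGraph.dist_le q
            _ = n := hlen
        have hdru' : n ≤ G.dist r u := by
          have htri : G.dist r v ≤ G.dist r u + G.dist u v :=
            hG.dist_triangle
          have huv : G.dist u v ≤ 1 := by
            rw [SimpleGraph.dist_comm]
            exact (SimpleGraph.dist_eq_one_iff_adj.mpr hadj).le
          omega
        have hdru'' : G.dist r u = n := le_antisymm hdru hdru'
        have huS : u ∈ S := by
          intro b hb
          have h1 : G.dist v b ≤ G.dist v u + G.dist u b := hG.dist_triangle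
          have h2 : G.dist v u ≤ 1 := (SimpleGraph.dist_eq_one_iff_adj.mpr hadj).le
          have h3 : G.dist r v ≤ G.dist v b := hv b hb
          have h4 : G.dist r u = n := hdru''
          omega
        have hstep : (G.induce S).Adj ⟨u, huS⟩ ⟨v, hv⟩ := by
          exact hadj.symm
        exact (ih u huS hdru'').trans hstep.reachable
  intro x y
  obtain ⟨v, hv⟩ := x
  obtain ⟨w, hw⟩ := y
  exact ((key _ v hv rfl).symm.trans (key _ w hw rfl))
end

section
/- Let G be a finite connected simple graph with vertex set V, r ∈ V a distinguished root, and B ⊆ V a set of Byzantine vertices with r ∉ B. Set R = B ∪ {r} and suppose H : V → ℕ satisfies the 'min+1' recurrence with respect to R: H(v) = 0 for every v ∈ R, and H(v) = 1 + min{H(u) : u a neighbor of v} for every v ∉ R. Then every vertex v lying outside the containment zone S_B* (i.e. satisfying d(v,b) ≥ d(r,v) for every b ∈ B) has H(v) = d(r,v), its true breadth-first distance to the root. -/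
/-!
A solution `H` of the `min+1` recurrence with respect to `R` is the distance to `R`: every walk
ending in `R` bounds `H` from above, and descending to a neighbour of minimal height produces a
walk into `R` of length exactly `H v`. Outside `S_B*` the root is a nearest point of `B ∪ {r}`.
-/

namespace SimpleGraph

variable {V : Type*} {G : SimpleGraph V} {R : Set V} {H : V → ℕ}

theorem le_length_of_minPlusOne (hroot : ∀ v ∈ R, H v = 0)
    (hmin : ∀ v ∉ R, H v = 1 + sInf (H '' G.neighborSet v)) {v u : V} (hu : u ∈ R)
    (p : G.Walk v u) : H v ≤ p.length := by
  induction p with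
  | nil => simp [hroot _ hu]
  | @cons v w _ hadj q ih =>
    specialize ih hu
    by_cases hv : v ∈ R
    · simp [hroot v hv]
    · have : sInf (H '' G.neighborSet v) ≤ H w := Nat.sInf_le ⟨w, hadj, rfl⟩
      rw [hmin v hv, Walk.length_cons]
      omega

theorem exists_walk_length_eq_of_minPlusOne (hroot : ∀ v ∈ R, H v = 0)
    (hmin : ∀ v ∉ R, H v = 1 + sInf (H '' G.neighborSet v))
    (hnbr : ∀ v ∉ R, (G.neighborSet v).Nonempty) (v : V) :
    ∃ u ∈ R, ∃ p : G.Walk v u, p.length = H v := by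
  induction hn : H v generalizing v with
  | zero =>
    have hv : v ∈ R := by
      by_contra hv
      have := hmin v hv
      omega
    exact ⟨v, hv, .nil, rfl⟩
  | succ n ih =>
    have hv : v ∉ R := fun hv ↦ by simp [hroot v hv] at hn
    obtain ⟨w, (hadj : G.Adj v w), hw⟩ := Nat.sInf_mem ((hnbr v hv).image H)
    obtain ⟨u, hu, q, hq⟩ := ih w (by have := hmin v hv; omega)
    exact ⟨u, hu, .cons hadj q, by rw [Walk.length_cons, hq]⟩

end SimpleGraph

open SimpleGraph in
theorem minPlusOne_correct_outside_SBstar_general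
    {V : Type*} (G : SimpleGraph V) (hG : G.Connected) (r : V)
    (B : Set V)
    (H : V → ℕ)
    (hroot : ∀ v ∈ B ∪ {r}, H v = 0)
    (hmin : ∀ v ∉ B ∪ {r}, H v = 1 + sInf (H '' (G.neighborSet v))) :
    ∀ v : V, (∀ b ∈ B, G.dist r v ≤ G.dist v b) → H v = G.dist r v := by
  intro v hv
  have hnbr : ∀ v ∉ B ∪ {r}, (G.neighborSet v).Nonempty := fun v hvR ↦
    (hG v r).nonempty_neighborSet_left fun h ↦ hvR (.inr h)
  obtain ⟨u, hu, p, hp⟩ := exists_walk_length_eq_of_minPlusOne hroot hmin hnbr v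
  refine le_antisymm ?_ ?_
  · obtain ⟨q, hq⟩ := (hG v r).exists_walk_length_eq_dist
    rw [dist_comm, ← hq]
    exact le_length_of_minPlusOne hroot hmin (.inr rfl) q
  · rw [← hp]
    rcases hu with hb | rfl
    · exact (hv u hb).trans (dist_le p)
    · exact dist_comm.trans_le (dist_le p)

/-- If `H` satisfies the `min+1` recurrence with respect to `R = B ∪ {r}`, then every vertex
outside the containment zone `S_B*` (i.e. with `d(v,b) ≥ d(r,v)` for every Byzantine `b`) has
`H v` equal to its true breadth-first distance `d(r,v)` to the root. -/
theorem minPlusOne_correct_outside_SBstar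
    {V : Type*} [Fintype V] (G : SimpleGraph V) (hG : G.Connected) (r : V)
    (B : Set V) (hrB : r ∉ B)
    (H : V → ℕ)
    (hroot : ∀ v ∈ B ∪ {r}, H v = 0)
    (hmin : ∀ v ∉ B ∪ {r}, H v = 1 + sInf (H '' (G.neighborSet v))) :
    ∀ v : V, (∀ b ∈ B, G.dist r v ≤ G.dist v b) → H v = G.dist r v :=
  minPlusOne_correct_outside_SBstar_general G hG r B H hroot hmin
end

section
/- Let G be a finite connected simple graph with vertex set V, r ∈ V a distinguished root, and B ⊆ V a set of Byzantine vertices with r ∉ B. Set R = B ∪ {r} and suppose H : V → ℕ satisfies the 'min+1' recurrence with respect to R: H(v) = 0 for every v ∈ R, and H(v) = 1 + min{H(u) : u a neighbor of v} for every v ∉ R. If a vertex v ≠ r lies outside the containment zone S_B (i.e. d(v,b) > d(r,v) for every b ∈ B) and u is any neighbor of v achieving min{H(w) : w a neighbor of v}, then d(r,u) = d(r,v) − 1, H(u) = H(v) − 1, and u lies outside S_B. -/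
/-!
A min+1 height is the graph distance to `R`: it never exceeds the length of a walk into `R`,
and descending along minimising neighbours reaches `R` in exactly
`H w` steps. For `v` outside `S_B` the bound `H v ≤ d(v,r) < d(v,b)` shows that the nearest
point of `R` is `r`, so `H v = d(r,v)`. A minimising neighbour `u` has `H u = H v - 1`, which
is still below `d(u,b) ≥ d(v,b) - 1`, so again `H u = d(r,u)`.
-/

namespace SimpleGraph

variable {V : Type*} (G : SimpleGraph V)

/-- For a vertex outside `R` without neighbours, `sInf ∅ = 0` forces `H v = 1`; this cannot
happen in a connected graph meeting `R`. -/
structure IsMinPlusOneHeight (R : Set V) (H : V → ℕ) : Prop where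
  eq_zero : ∀ v ∈ R, H v = 0
  eq_succ : ∀ v ∉ R, H v = 1 + sInf (H '' G.neighborSet v)

namespace IsMinPlusOneHeight

variable {G} {R : Set V} {H : V → ℕ}

theorem le_add_one_of_adj (h : G.IsMinPlusOneHeight R H) {v w : V} (hv : v ∉ R)
    (hadj : G.Adj v w) : H v ≤ H w + 1 := by
  have := Nat.sInf_le (Set.mem_image_of_mem H (show w ∈ G.neighborSet v from hadj))
  have := h.eq_succ v hv
  omega

theorem exists_adj_eq_add_one (h : G.IsMinPlusOneHeight R H) {v : V} (hv : v ∉ R)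
    (hne : (G.neighborSet v).Nonempty) : ∃ w, G.Adj v w ∧ H v = H w + 1 := by
  obtain ⟨w, hadj, hw⟩ := Nat.sInf_mem (hne.image H)
  exact ⟨w, hadj, by rw [h.eq_succ v hv, hw, add_comm]⟩

theorem le_length (h : G.IsMinPlusOneHeight R H) {w x : V} (hx : x ∈ R) :
    ∀ p : G.Walk w x, H w ≤ p.length
  | .nil => (h.eq_zero _ hx).le
  | .cons (v := w') hadj p => by
    by_cases hw : w ∈ R
    · simp [h.eq_zero w hw]
    · have := h.le_length hx p
      have := h.le_add_one_of_adj hw hadj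
      simp only [Walk.length_cons]
      omega

theorem le_dist (h : G.IsMinPlusOneHeight R H) {w x : V} (hx : x ∈ R) (hwx : G.Reachable w x) :
    H w ≤ G.dist w x := by
  obtain ⟨p, hp⟩ := hwx.exists_walk_length_eq_dist
  exact hp ▸ h.le_length hx p

theorem exists_walk_length_eq (h : G.IsMinPlusOneHeight R H) (hG : G.Connected)
    (hR : R.Nonempty) (w : V) : ∃ x ∈ R, ∃ p : G.Walk w x, p.length = H w := by
  induction hn : H w generalizing w with
  | zero =>
    have hw : w ∈ R := by
      by_contra hw
      have := h.eq_succ w hw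
      omega
    exact ⟨w, hw, .nil, rfl⟩
  | succ n ih =>
    by_cases hw : w ∈ R
    · exact absurd (h.eq_zero w hw) (by omega)
    obtain ⟨x₀, hx₀⟩ := hR
    obtain ⟨p₀⟩ := hG w x₀
    have hne : (G.neighborSet w).Nonempty :=
      ⟨_, p₀.adj_snd (Walk.not_nil_of_ne fun hwx => hw (hwx ▸ hx₀))⟩
    obtain ⟨w', hadj, hw'⟩ := h.exists_adj_eq_add_one hw hne
    obtain ⟨x, hx, p, hp⟩ := ih w' (by omega)
    exact ⟨x, hx, .cons hadj p, by simp [hp]⟩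

theorem exists_dist_eq (h : G.IsMinPlusOneHeight R H) (hG : G.Connected) (hR : R.Nonempty)
    (w : V) : ∃ x ∈ R, G.dist w x = H w := by
  obtain ⟨x, hx, p, hp⟩ := h.exists_walk_length_eq hG hR w
  exact ⟨x, hx, le_antisymm (hp ▸ G.dist_le p) (h.le_dist hx (hG w x))⟩

theorem eq_dist_of_lt_dist {B : Set V} {r : V} (h : G.IsMinPlusOneHeight (B ∪ {r}) H)
    (hG : G.Connected) {w : V} (hw : ∀ b ∈ B, H w < G.dist w b) : H w = G.dist r w := by
  obtain ⟨x, hx | rfl, hdist⟩ := h.exists_dist_eq hG ⟨r, .inr rfl⟩ w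
  · exact absurd (hw x hx) (by omega)
  · rw [← hdist, dist_comm]

end IsMinPlusOneHeight

end SimpleGraph

theorem minPlusOne_min_neighbor_outside_SB_general
    {V : Type*} (G : SimpleGraph V) (hG : G.Connected) (r : V)
    (B : Set V)
    (H : V → ℕ)
    (hroot : ∀ v ∈ B ∪ {r}, H v = 0)
    (hmin : ∀ v ∉ B ∪ {r}, H v = 1 + sInf (H '' (G.neighborSet v)))
    (v u : V) (hv : v ≠ r)
    (hvout : ∀ b ∈ B, G.dist r v < G.dist v b)
    (hadj : G.Adj v u) (hu : H u = sInf (H '' (G.neighborSet v))) :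
    G.dist r u = G.dist r v - 1 ∧ H u = H v - 1 ∧
      ∀ b ∈ B, G.dist r u < G.dist u b := by
  have hH : G.IsMinPlusOneHeight (B ∪ {r}) H := ⟨hroot, hmin⟩
  have hvR : v ∉ B ∪ {r} := by
    rintro (hvB | rfl)
    · simpa using hvout v hvB
    · exact hv rfl
  have hHv : H v = H u + 1 := by rw [hH.eq_succ v hvR, hu, add_comm]
  have hv_le : H v ≤ G.dist r v := G.dist_comm (u := v) ▸ hH.le_dist (.inr rfl) (hG v r)
  have hHv_eq : H v = G.dist r v :=
    hH.eq_dist_of_lt_dist hG fun b hb => hv_le.trans_lt (hvout b hb)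
  have hu_lt : ∀ b ∈ B, H u < G.dist u b := fun b hb => by
    have := hG.dist_triangle (u := v) (v := u) (w := b)
    have := hvout b hb
    have := SimpleGraph.dist_eq_one_iff_adj.mpr hadj
    omega
  have hHu_eq : H u = G.dist r u := hH.eq_dist_of_lt_dist hG hu_lt
  exact ⟨by omega, by omega, fun b hb => hHu_eq ▸ hu_lt b hb⟩

/-- Suppose `H` satisfies the `min+1` recurrence with respect to `R = B ∪ {r}`. If `v ≠ r`
lies outside the containment zone `S_B` and `u` is any neighbor of `v` achieving the minimal
height among the neighbors of `v`, then `d(r,u) = d(r,v) - 1`, `H u = H v - 1`, and `u` also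
lies outside `S_B`. -/
theorem minPlusOne_min_neighbor_outside_SB
    {V : Type*} [Fintype V] (G : SimpleGraph V) (hG : G.Connected) (r : V)
    (B : Set V) (hrB : r ∉ B)
    (H : V → ℕ)
    (hroot : ∀ v ∈ B ∪ {r}, H v = 0)
    (hmin : ∀ v ∉ B ∪ {r}, H v = 1 + sInf (H '' (G.neighborSet v)))
    (v u : V) (hv : v ≠ r)
    (hvout : ∀ b ∈ B, G.dist r v < G.dist v b)
    (hadj : G.Adj v u) (hu : H u = sInf (H '' (G.neighborSet v))) :
    G.dist r u = G.dist r v - 1 ∧ H u = H v - 1 ∧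
      ∀ b ∈ B, G.dist r u < G.dist u b :=
  minPlusOne_min_neighbor_outside_SB_general G hG r B H hroot hmin v u hv hvout hadj hu
end

section
/- Let G be a finite connected simple graph with vertex set V, r ∈ V a distinguished root, and B ⊆ V a set of Byzantine vertices with r ∉ B. Set R = B ∪ {r}, and let P : V → Option V and H : V → ℕ satisfy: P(v) = none and H(v) = 0 for every v ∈ R; and for every v ∉ R, P(v) = some u for some neighbor u of v with H(u) = min{H(w) : w a neighbor of v} and H(v) = H(u) + 1. Then for every vertex v lying outside the containment zone S_B (i.e. d(v,b) > d(r,v) for every b ∈ B), following the parent pointers from v reaches the root r (and not a Byzantine vertex) in exactly d(r,v) steps, and every vertex on this parent path lies outside S_B. -/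
/-!
In a legitimate configuration every height is the distance to the nearest element of
`R = B ∪ {r}`: a neighbour on a geodesic bounds `H` from above, and descending along parent
pointers reaches a vertex of height `0`, i.e. an element of `R`, after exactly `H v` steps.
If `H v < d(v, b)` for every `b ∈ B`, that element cannot be Byzantine, so it is `r` and
`H v = d(r, v)`. This invariant survives a step to the parent, because the height drops by one
and the distance to each `b` by at most one; outside `S_B` it holds since `H v ≤ d(r, v)`.
-/

namespace SimpleGraph

variable {V : Type*} {G : SimpleGraph V} {H : V → ℕ}

theorem Walk.le_add_length (hH : ∀ v w, G.Adj v w → H v ≤ H w + 1) {u v : V}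
    (p : G.Walk u v) : H u ≤ H v + p.length := by
  induction p with
  | nil => simp
  | cons hadj _ ih =>
    have := hH _ _ hadj
    rw [Walk.length_cons]
    omega

theorem Connected.le_add_dist (hG : G.Connected) (hH : ∀ v w, G.Adj v w → H v ≤ H w + 1)
    (u v : V) : H u ≤ H v + G.dist u v := by
  obtain ⟨p, hp⟩ := hG.exists_walk_length_eq_dist u v
  exact hp ▸ p.le_add_length hH

section MinPlusOne

variable {R : Set V} {P : V → Option V}
  (hroot : ∀ v ∈ R, P v = none ∧ H v = 0)
  (hvert : ∀ v ∉ R, ∃ u : V, P v = some u ∧ G.Adj v u ∧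
    H u = sInf (H '' (G.neighborSet v)) ∧ H v = H u + 1)

include hroot hvert in
theorem height_le_height_add_one_of_adj {v w : V} (hvw : G.Adj v w) : H v ≤ H w + 1 := by
  by_cases hv : v ∈ R
  · simp [(hroot v hv).2]
  · obtain ⟨u, -, -, hu, hvu⟩ := hvert v hv
    have : sInf (H '' G.neighborSet v) ≤ H w := Nat.sInf_le ⟨w, hvw, rfl⟩
    omega

include hvert in
theorem mem_of_height_eq_zero {v : V} (hv : H v = 0) : v ∈ R := by
  by_contra hvR
  obtain ⟨u, -, -, -, hvu⟩ := hvert v hvR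
  omega

include hroot hvert in
theorem adj_parent_and_height_parent {step : V → V}
    (hstep : ∀ v u : V, P v = some u → step v = u) {v : V} (hv : 0 < H v) :
    G.Adj v (step v) ∧ H (step v) + 1 = H v := by
  have hvR : v ∉ R := fun h => by simp [(hroot v h).2] at hv
  obtain ⟨u, hPu, hvu, -, hHv⟩ := hvert v hvR
  rw [hstep v u hPu]
  exact ⟨hvu, hHv.symm⟩

end MinPlusOne

section Descent

variable {step : V → V} (hstep : ∀ v, 0 < H v → G.Adj v (step v) ∧ H (step v) + 1 = H v)
include hstep

theorem height_iterate_add {v : V} {i : ℕ} (hi : i ≤ H v) : H (step^[i] v) + i = H v := by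
  induction i with
  | zero => rfl
  | succ i ih =>
    have hHi := ih (by omega)
    have := (hstep (step^[i] v) (by omega)).2
    rw [Function.iterate_succ_apply']
    omega

theorem Connected.dist_iterate_le (hG : G.Connected) {v : V} {i : ℕ} (hi : i ≤ H v) :
    G.dist v (step^[i] v) ≤ i := by
  induction i with
  | zero => simp
  | succ i ih =>
    have hHi := height_iterate_add hstep (v := v) (i := i) (by omega)
    have hadj := (hstep (step^[i] v) (by omega)).1
    have := hG.dist_triangle (u := v) (v := step^[i] v) (w := step (step^[i] v))
    rw [dist_eq_one_iff_adj.mpr hadj] at this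
    rw [Function.iterate_succ_apply']
    omega

theorem Connected.dist_le_height_of_forall_height_lt_dist (hG : G.Connected) {B : Set V}
    {r : V} (hzero : ∀ v, H v = 0 → v ∈ B ∪ {r}) {v : V}
    (hB : ∀ b ∈ B, H v < G.dist v b) : G.dist r v ≤ H v := by
  set w := step^[H v] v
  have hdist : G.dist v w ≤ H v := hG.dist_iterate_le hstep le_rfl
  rcases hzero w (by simpa using height_iterate_add hstep (v := v) le_rfl) with hwB | hwr
  · exact absurd (hB w hwB) (by omega)
  · rw [Set.mem_singleton_iff.mp hwr, dist_comm] at hdist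
    exact hdist

theorem Connected.forall_height_lt_dist_iterate (hG : G.Connected) {B : Set V} {v : V}
    (hB : ∀ b ∈ B, H v < G.dist v b) {i : ℕ} (hi : i ≤ H v) :
    ∀ b ∈ B, H (step^[i] v) < G.dist (step^[i] v) b := by
  induction i with
  | zero => exact hB
  | succ i ih =>
    intro b hb
    have hHi := height_iterate_add hstep (v := v) (i := i) (by omega)
    obtain ⟨hadj, hHstep⟩ := hstep (step^[i] v) (by omega)
    have := hG.dist_triangle (u := step^[i] v) (v := step (step^[i] v)) (w := b)
    rw [dist_eq_one_iff_adj.mpr hadj] at this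
    have := ih (by omega) b hb
    rw [Function.iterate_succ_apply']
    omega

end Descent

end SimpleGraph

open SimpleGraph in
theorem parent_path_outside_SB_reaches_root_general
    {V : Type*} (G : SimpleGraph V) (hG : G.Connected) (r : V)
    (B : Set V)
    (P : V → Option V) (H : V → ℕ)
    (hroot : ∀ v ∈ B ∪ {r}, P v = none ∧ H v = 0)
    (hvert : ∀ v ∉ B ∪ {r}, ∃ u : V, P v = some u ∧ G.Adj v u ∧
      H u = sInf (H '' (G.neighborSet v)) ∧ H v = H u + 1)
    (step : V → V)
    (hstep : ∀ v u : V, P v = some u → step v = u) :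
    ∀ v : V, (∀ b ∈ B, G.dist r v < G.dist v b) →
      step^[G.dist r v] v = r ∧
      (∀ i < G.dist r v, step^[i] v ≠ r) ∧
      (∀ i ≤ G.dist r v, ∀ b ∈ B, G.dist r (step^[i] v) < G.dist (step^[i] v) b) := by
  intro v hv
  have hr : H r = 0 := (hroot r (Or.inr rfl)).2
  have hdesc : ∀ w, 0 < H w → G.Adj w (step w) ∧ H (step w) + 1 = H w :=
    fun _ => adj_parent_and_height_parent hroot hvert hstep
  have hzero : ∀ w, H w = 0 → w ∈ B ∪ {r} := fun _ => mem_of_height_eq_zero hvert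
  have hHv_le : H v ≤ G.dist r v := by
    simpa [hr, dist_comm] using
      hG.le_add_dist (fun _ _ => height_le_height_add_one_of_adj hroot hvert) v r
  have hB : ∀ b ∈ B, H v < G.dist v b := fun b hb => hHv_le.trans_lt (hv b hb)
  have hBi : ∀ i ≤ H v, ∀ b ∈ B, H (step^[i] v) < G.dist (step^[i] v) b :=
    fun _ => hG.forall_height_lt_dist_iterate hdesc hB
  have hdist_i : ∀ i ≤ H v, G.dist r (step^[i] v) ≤ H (step^[i] v) := fun i hi =>
    hG.dist_le_height_of_forall_height_lt_dist hdesc hzero (hBi i hi)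
  have hHv : H v = G.dist r v := le_antisymm hHv_le (by simpa using hdist_i 0 (Nat.zero_le _))
  rw [← hHv]
  refine ⟨?_, fun i hi hir => ?_, fun i hi b hb => (hdist_i i hi).trans_lt (hBi i hi b hb)⟩
  · have hHw := height_iterate_add hdesc (v := v) le_rfl
    have := hdist_i (H v) le_rfl
    exact ((hG.dist_eq_zero_iff).mp (by omega)).symm
  · have := height_iterate_add hdesc (v := v) hi.le
    rw [hir, hr] at this
    omega

/-- In a legitimate configuration of the `min+1` spanning-forest protocol with root set
`R = B ∪ {r}`, following the parent pointers from any vertex `v` lying outside the containment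
zone `S_B` reaches the real root `r` (and not a Byzantine vertex) in exactly `d(r,v)` steps,
and every vertex on this parent path lies outside `S_B`. -/
theorem parent_path_outside_SB_reaches_root
    {V : Type*} [Fintype V] (G : SimpleGraph V) (hG : G.Connected) (r : V)
    (B : Set V) (hrB : r ∉ B)
    (P : V → Option V) (H : V → ℕ)
    (hroot : ∀ v ∈ B ∪ {r}, P v = none ∧ H v = 0)
    (hvert : ∀ v ∉ B ∪ {r}, ∃ u : V, P v = some u ∧ G.Adj v u ∧
      H u = sInf (H '' (G.neighborSet v)) ∧ H v = H u + 1)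
    (step : V → V)
    (hstep : ∀ v u : V, P v = some u → step v = u) :
    ∀ v : V, (∀ b ∈ B, G.dist r v < G.dist v b) →
      step^[G.dist r v] v = r ∧
      (∀ i < G.dist r v, step^[i] v ≠ r) ∧
      (∀ i ≤ G.dist r v, ∀ b ∈ B, G.dist r (step^[i] v) < G.dist (step^[i] v) b) :=
  parent_path_outside_SB_reaches_root_general G hG r B P H hroot hvert step hstep
end
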